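/- arXiv:1011.0180 — 3 statements merged into one kernel-verified Lean document; each statement's English description precedes it below -/
import Mathlib

section
/- For every c > 0, if α ∈ (0,1) satisfies h(α) + (c/2)·ln(1−α²) < 0, where h(α) = −α ln α − (1−α) ln(1−α), then the probability that G(n, m = cn/2) contains an independent set of size ⌈αn⌉ tends to 0 as n → ∞. -/
/-!
A set `S` of `k` vertices is independent exactly when every edge avoids `S × S`, which happens
for a uniformly random edge with probability `1 - (k/n)²`. A union bound over the `n.choose k`
candidate sets bounds the probability of an independent set of size `k = ⌈αn⌉` among `m = ⌈cn/2⌉`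
edges by `n.choose k · (1 - α²)^m`, and `n.choose k ≤ α^{-k} (1-α)^{-(n-k)}` (a single term of
`(α + (1 - α))ⁿ`) turns this into `α⁻¹ · exp(h(α) + (c/2) ln(1 - α²))ⁿ`, which tends to `0`.
-/

open Filter Finset Real

section Counting

variable {ι V : Type*}

def HasIndependentSet (G : ι → V × V) (k : ℕ) : Prop :=
  ∃ S : Finset V, S.card = k ∧ ∀ i, ¬((G i).1 ∈ S ∧ (G i).2 ∈ S)

variable [Fintype ι] [Fintype V]

lemma card_piFinset_compl_product [DecidableEq ι] [DecidableEq V] (S : Finset V) :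
    #(Fintype.piFinset fun _ : ι => (S ×ˢ S)ᶜ)
      = (Fintype.card V ^ 2 - #S ^ 2) ^ Fintype.card ι := by
  rw [Fintype.card_piFinset, prod_const, card_compl, card_product, Fintype.card_prod, card_univ,
    sq, sq]

lemma card_hasIndependentSet_le (k : ℕ) :
    Nat.card {G : ι → V × V // HasIndependentSet G k}
      ≤ (Fintype.card V).choose k * (Fintype.card V ^ 2 - k ^ 2) ^ Fintype.card ι := by
  classical
  rw [Nat.card_eq_fintype_card, Fintype.card_subtype]
  calc #(univ.filter _)
      ≤ #((univ.powersetCard k).biUnion fun S : Finset V =>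
          Fintype.piFinset fun _ : ι => (S ×ˢ S)ᶜ) := by
        refine card_le_card fun G hG => ?_
        obtain ⟨S, hS, hind⟩ := (mem_filter.1 hG).2
        exact mem_biUnion.2 ⟨S, mem_powersetCard.2 ⟨subset_univ S, hS⟩,
          Fintype.mem_piFinset.2 fun i => by simpa [mem_product] using hind i⟩
    _ ≤ #(univ.powersetCard k) * (Fintype.card V ^ 2 - k ^ 2) ^ Fintype.card ι :=
        card_biUnion_le_card_mul _ _ _ fun S hS => by
          rw [card_piFinset_compl_product, (mem_powersetCard.1 hS).2]
    _ = (Fintype.card V).choose k * (Fintype.card V ^ 2 - k ^ 2) ^ Fintype.card ι := by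
        rw [card_powersetCard, card_univ]

lemma card_hasIndependentSet_div_le [Nonempty V] {k : ℕ} (hk : k ≤ Fintype.card V) :
    (Nat.card {G : ι → V × V // HasIndependentSet G k} : ℝ) /
        ((Fintype.card V : ℝ) ^ 2) ^ Fintype.card ι
      ≤ (Fintype.card V).choose k * (1 - ((k : ℝ) / Fintype.card V) ^ 2) ^ Fintype.card ι := by
  have hV : (0 : ℝ) < Fintype.card V := by exact_mod_cast Fintype.card_pos
  have hcast : ((Fintype.card V ^ 2 - k ^ 2 : ℕ) : ℝ) = (Fintype.card V : ℝ) ^ 2 - (k : ℝ) ^ 2 := by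
    rw [Nat.cast_sub (Nat.pow_le_pow_left hk 2), Nat.cast_pow, Nat.cast_pow]
  rw [div_le_iff₀ (by positivity), mul_assoc, ← mul_pow, div_pow, sub_mul, div_mul_cancel₀ _
    (by positivity), one_mul, ← hcast]
  exact_mod_cast card_hasIndependentSet_le k

end Counting

lemma choose_le_inv_pow_mul_pow {x : ℝ} (hx0 : 0 < x) (hx1 : x < 1) {n k : ℕ} (hk : k ≤ n) :
    (n.choose k : ℝ) ≤ (x ^ k)⁻¹ * ((1 - x) ^ (n - k))⁻¹ := by
  have hterm : x ^ k * (1 - x) ^ (n - k) * n.choose k ≤ 1 := by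
    calc x ^ k * (1 - x) ^ (n - k) * n.choose k
        ≤ ∑ j ∈ range (n + 1), x ^ j * (1 - x) ^ (n - j) * n.choose j :=
          single_le_sum (f := fun j => x ^ j * (1 - x) ^ (n - j) * (n.choose j : ℝ))
            (fun j _ => by positivity) (mem_range.2 (Nat.lt_succ_of_le hk))
      _ = 1 := by rw [← add_pow, add_sub_cancel, one_pow]
  rw [← mul_inv, ← one_div, le_div_iff₀ (by positivity), mul_comm]
  exact hterm

lemma pow_le_exp_mul_log {x t : ℝ} (hx0 : 0 < x) (hx1 : x ≤ 1) {j : ℕ} (hj : t ≤ j) :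
    x ^ j ≤ exp (t * log x) := by
  rw [← exp_log (pow_pos hx0 j), log_pow]
  exact exp_le_exp.2 (mul_le_mul_of_nonpos_right hj (log_nonpos hx0.le hx1))

lemma inv_pow_le_exp_neg_mul_log {x t : ℝ} (hx0 : 0 < x) (hx1 : x ≤ 1) {j : ℕ} (hj : j ≤ t) :
    (x ^ j)⁻¹ ≤ exp (-(t * log x)) := by
  rw [← exp_log (pow_pos hx0 j), log_pow, ← exp_neg]
  exact exp_le_exp.2 (neg_le_neg (mul_le_mul_of_nonpos_right hj (log_nonpos hx0.le hx1)))

lemma choose_mul_pow_le_exp {c α : ℝ} (h0 : 0 < α) (h1 : α < 1) {n k m : ℕ}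
    (hk : α * n ≤ k) (hk' : k ≤ α * n + 1) (hkn : k ≤ n) (hm : c * n / 2 ≤ m) :
    (n.choose k : ℝ) * (1 - α ^ 2) ^ m
      ≤ α⁻¹ * exp ((-α * log α - (1 - α) * log (1 - α)) + c / 2 * log (1 - α ^ 2)) ^ n := by
  have hnk : ((n - k : ℕ) : ℝ) ≤ (1 - α) * n := by rw [Nat.cast_sub hkn]; linarith
  have hα2 : 0 < 1 - α ^ 2 := by nlinarith
  have hpow : 0 ≤ (1 - α ^ 2) ^ m := by positivity
  calc (n.choose k : ℝ) * (1 - α ^ 2) ^ m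
      ≤ (α ^ k)⁻¹ * ((1 - α) ^ (n - k))⁻¹ * (1 - α ^ 2) ^ m := by
        gcongr ?_ * _
        exact choose_le_inv_pow_mul_pow h0 h1 hkn
    _ ≤ exp (-((α * n + 1) * log α)) * exp (-((1 - α) * n * log (1 - α)))
          * exp (c * n / 2 * log (1 - α ^ 2)) := by
        gcongr ?_ * ?_ * ?_
        · exact inv_pow_le_exp_neg_mul_log h0 h1.le hk'
        · exact inv_pow_le_exp_neg_mul_log (by linarith) (by linarith) hnk
        · exact pow_le_exp_mul_log hα2 (by nlinarith) hm
    _ = α⁻¹ * exp ((-α * log α - (1 - α) * log (1 - α)) + c / 2 * log (1 - α ^ 2)) ^ n := by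
        rw [← exp_nat_mul, ← exp_log (inv_pos.2 h0), log_inv, ← exp_add, ← exp_add, ← exp_add]
        ring_nf

lemma card_hasIndependentSet_div_le_exp {c α : ℝ} (h0 : 0 < α) (h1 : α < 1) {n : ℕ}
    (hn : 0 < n) :
    (Nat.card {G : Fin ⌈c * n / 2⌉₊ → Fin n × Fin n // HasIndependentSet G ⌈α * n⌉₊} : ℝ) /
        ((n : ℝ) ^ 2) ^ ⌈c * n / 2⌉₊
      ≤ α⁻¹ * exp ((-α * log α - (1 - α) * log (1 - α)) + c / 2 * log (1 - α ^ 2)) ^ n := by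
  have : Nonempty (Fin n) := ⟨⟨0, hn⟩⟩
  have hn' : (0 : ℝ) < n := by exact_mod_cast hn
  have hk : α * n ≤ ⌈α * n⌉₊ := Nat.le_ceil _
  have hkn : ⌈α * n⌉₊ ≤ n := Nat.ceil_le.2 (by nlinarith)
  have hkn' : (⌈α * n⌉₊ : ℝ) / n ≤ 1 := (div_le_one hn').2 (by exact_mod_cast hkn)
  have hαk : α ≤ (⌈α * n⌉₊ : ℝ) / n := (le_div_iff₀ hn').2 hk
  have hcount := card_hasIndependentSet_div_le (ι := Fin ⌈c * n / 2⌉₊)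
    (hkn.trans_eq (Fintype.card_fin n).symm)
  simp only [Fintype.card_fin] at hcount
  calc _ ≤ n.choose ⌈α * n⌉₊ * (1 - ((⌈α * n⌉₊ : ℝ) / n) ^ 2) ^ ⌈c * n / 2⌉₊ := hcount
    _ ≤ n.choose ⌈α * n⌉₊ * (1 - α ^ 2) ^ ⌈c * n / 2⌉₊ := by
        gcongr
        nlinarith
    _ ≤ _ := choose_mul_pow_le_exp h0 h1 hk (Nat.ceil_lt_add_one (by positivity)).le hkn
        (Nat.le_ceil _)

theorem first_moment_upper_bound_general (c α : ℝ) (h0 : 0 < α) (h1 : α < 1)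
    (hfm : (-α * Real.log α - (1 - α) * Real.log (1 - α)) +
        c / 2 * Real.log (1 - α ^ 2) < 0) :
    Tendsto (fun n : ℕ =>
        (Nat.card {G : Fin ⌈c * n / 2⌉₊ → Fin n × Fin n //
            ∃ S : Finset (Fin n), S.card = ⌈α * n⌉₊ ∧
              ∀ i, ¬((G i).1 ∈ S ∧ (G i).2 ∈ S)} : ℝ) /
          ((n : ℝ) ^ 2) ^ (⌈c * n / 2⌉₊))
      atTop (nhds 0) := by
  have hgeom : Tendsto (fun n : ℕ => α⁻¹ *
      exp ((-α * log α - (1 - α) * log (1 - α)) + c / 2 * log (1 - α ^ 2)) ^ n)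
      atTop (nhds 0) := by
    simpa using (tendsto_pow_atTop_nhds_zero_of_lt_one (exp_nonneg _)
      (exp_lt_one_iff.2 hfm)).const_mul α⁻¹
  refine squeeze_zero' (Eventually.of_forall fun n => by positivity) ?_ hgeom
  filter_upwards [eventually_gt_atTop 0] with n hn
  exact card_hasIndependentSet_div_le_exp h0 h1 hn

/-- First moment upper bound: if `h(α) + (c/2) ln(1-α²) < 0`, then the
probability that the random (multi)graph with `n` vertices and `⌈cn/2⌉` edges
(each edge having both endpoints chosen independently and uniformly) contains
an independent set of size `⌈αn⌉` tends to `0` as `n → ∞`. -/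
theorem first_moment_upper_bound (c α : ℝ) (hc : 0 < c) (h0 : 0 < α) (h1 : α < 1)
    (hfm : (-α * Real.log α - (1 - α) * Real.log (1 - α)) +
        c / 2 * Real.log (1 - α ^ 2) < 0) :
    Tendsto (fun n : ℕ =>
        (Nat.card {G : Fin ⌈c * n / 2⌉₊ → Fin n × Fin n //
            ∃ S : Finset (Fin n), S.card = ⌈α * n⌉₊ ∧
              ∀ i, ¬((G i).1 ∈ S ∧ (G i).2 ∈ S)} : ℝ) /
          ((n : ℝ) ^ 2) ^ (⌈c * n / 2⌉₊))
      atTop (nhds 0) :=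
  first_moment_upper_bound_general c α h0 h1 hfm
end

section
/- Fix constants b > 0 with b ≠ 1. Suppose ζ = α(1 − δ) with δ = b/ln(1/α), and c = c(α) satisfies c·α/ln(1/α) → 2 as α → 0⁺. Then ψ″(ζ) = c/(1−α)⁴ − 2/(α−ζ) − 1/ζ − 1/(1−2α+ζ) is negative for sufficiently small α if b < 1, and positive for sufficiently small α if b > 1. -/
/-! With `L = log (1/α)`, multiplying `ψ″(ζ)` by the positive scale `α / L` turns it into
`(c α / L) / (1 - α)⁴ - 2 / b - 1 / (L - b) - (α / L) / (1 - α - α b / L)`, which tends to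
`2 - 2 / b`. The sign of this limit is therefore the sign of `ψ″(ζ)` for small `α`. -/

open Filter Topology Real

noncomputable def psiSecondDeriv (c α ζ : ℝ) : ℝ :=
  c / (1 - α) ^ 4 - 2 / (α - ζ) - 1 / ζ - 1 / (1 - 2 * α + ζ)

theorem Filter.Eventually.exists_forall_of_nhdsGT {X : Type*} [TopologicalSpace X]
    [LinearOrder X] [OrderTopology X] [NoMaxOrder X] {a : X} {p : X → Prop}
    (h : ∀ᶠ x in 𝓝[>] a, p x) :
    ∃ u > a, ∀ x, a < x → x < u → p x := by
  obtain ⟨u, hu, hsub⟩ := mem_nhdsGT_iff_exists_Ioo_subset.1 h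
  exact ⟨u, hu, fun x hax hxu => hsub ⟨hax, hxu⟩⟩

theorem Filter.Tendsto.eventually_neg_of_mul {ι R : Type*} [MulZeroClass R] [LinearOrder R]
    [PosMulMono R] [TopologicalSpace R] [OrderTopology R] {l : Filter ι} {f g : ι → R} {a : R}
    (h : Tendsto (fun x => f x * g x) l (𝓝 a)) (ha : a < 0) (hg : ∀ᶠ x in l, 0 < g x) :
    ∀ᶠ x in l, f x < 0 := by
  filter_upwards [h.eventually_lt_const ha, hg] with x hfg hgx
  exact neg_of_mul_neg_left hfg hgx.le

theorem Filter.Tendsto.eventually_pos_of_mul {ι R : Type*} [MulZeroClass R] [LinearOrder R]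
    [MulPosReflectLT R] [TopologicalSpace R] [OrderTopology R] {l : Filter ι} {f g : ι → R}
    {a : R} (h : Tendsto (fun x => f x * g x) l (𝓝 a)) (ha : 0 < a)
    (hg : ∀ᶠ x in l, 0 < g x) :
    ∀ᶠ x in l, 0 < f x := by
  filter_upwards [h.eventually_const_lt ha, hg] with x hfg hgx
  exact pos_of_mul_pos_left hfg hgx.le

theorem tendsto_log_one_div_nhdsGT_zero :
    Tendsto (fun α : ℝ => log (1 / α)) (𝓝[>] 0) atTop := by
  refine (tendsto_neg_atBot_atTop.comp tendsto_log_nhdsGT_zero).congr fun α => ?_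
  rw [Function.comp_apply, one_div, log_inv]

theorem psiSecondDeriv_mul_div_eq {c α b L : ℝ} (hα : α ≠ 0) (hL : L ≠ 0) :
    psiSecondDeriv c α (α * (1 - b / L)) * (α / L) =
      c * α / L / (1 - α) ^ 4 - 2 / b - 1 / (L - b) - α / L / (1 - α - α / L * b) := by
  have hq : α / L ≠ 0 := div_ne_zero hα hL
  have cancel (k x : ℝ) : k / (α / L * x) * (α / L) = k / x := by
    rw [div_mul_eq_mul_div, mul_comm k, mul_div_mul_left _ _ hq]
  have e1 : α - α * (1 - b / L) = α / L * b := by ring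
  have e2 : 1 - 2 * α + α * (1 - b / L) = 1 - α - α / L * b := by ring
  have e3 : α * (1 - b / L) = α / L * (L - b) := by field_simp
  rw [psiSecondDeriv, e1, e2, e3]
  simp only [sub_mul, cancel]
  ring

theorem tendsto_psiSecondDeriv_mul_div_log (b : ℝ) (c : ℝ → ℝ)
    (hc : Tendsto (fun α => c α * α / log (1 / α)) (𝓝[>] 0) (𝓝 2)) :
    Tendsto (fun α => psiSecondDeriv (c α) α (α * (1 - b / log (1 / α))) * (α / log (1 / α)))
      (𝓝[>] 0) (𝓝 (2 - 2 / b)) := by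
  have hL := tendsto_log_one_div_nhdsGT_zero
  have hα : Tendsto (fun α : ℝ => α) (𝓝[>] 0) (𝓝 0) :=
    tendsto_nhdsWithin_of_tendsto_nhds tendsto_id
  have hq : Tendsto (fun α => α / log (1 / α)) (𝓝[>] 0) (𝓝 0) := by
    simpa [div_eq_mul_inv] using hα.mul hL.inv_tendsto_atTop
  have hpow : Tendsto (fun α : ℝ => (1 - α) ^ 4) (𝓝[>] 0) (𝓝 1) := by
    simpa using ((tendsto_const_nhds (x := (1 : ℝ))).sub hα).pow 4
  have hLb : Tendsto (fun α => 1 / (log (1 / α) - b)) (𝓝[>] 0) (𝓝 0) := by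
    have : Tendsto (fun α => log (1 / α) - b) (𝓝[>] 0) atTop := by
      simpa only [sub_eq_add_neg] using tendsto_atTop_add_const_right _ (-b) hL
    exact this.inv_tendsto_atTop.congr fun α => (one_div _).symm
  have hden : Tendsto (fun α => 1 - α - α / log (1 / α) * b) (𝓝[>] 0) (𝓝 1) := by
    simpa using ((tendsto_const_nhds (x := (1 : ℝ))).sub hα).sub (hq.mul_const b)
  have hlim := (((hc.div hpow one_ne_zero).sub (tendsto_const_nhds (x := 2 / b))).sub hLb).sub
    (hq.div hden one_ne_zero)
  rw [div_one, zero_div, sub_zero, sub_zero] at hlim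
  refine hlim.congr' ?_
  filter_upwards [self_mem_nhdsWithin, hL.eventually_gt_atTop 0] with α hα hLα
  exact (psiSecondDeriv_mul_div_eq hα.ne' hLα.ne').symm

theorem psi_second_deriv_sign_general (b : ℝ) (hb : 0 < b) (c : ℝ → ℝ)
    (hc : Tendsto (fun α => c α * α / Real.log (1 / α))
      (nhdsWithin 0 (Set.Ioi 0)) (nhds 2)) :
    ∃ α₀ > 0, ∀ α : ℝ, 0 < α → α < α₀ →
      (b < 1 →
        c α / (1 - α) ^ 4 - 2 / (α - α * (1 - b / Real.log (1 / α))) -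
          1 / (α * (1 - b / Real.log (1 / α))) -
          1 / (1 - 2 * α + α * (1 - b / Real.log (1 / α))) < 0) ∧
      (1 < b →
        0 < c α / (1 - α) ^ 4 - 2 / (α - α * (1 - b / Real.log (1 / α))) -
          1 / (α * (1 - b / Real.log (1 / α))) -
          1 / (1 - 2 * α + α * (1 - b / Real.log (1 / α)))) := by
  have hlim := tendsto_psiSecondDeriv_mul_div_log b c hc
  have hscale : ∀ᶠ α in 𝓝[>] (0 : ℝ), 0 < α / log (1 / α) := by
    filter_upwards [self_mem_nhdsWithin, tendsto_log_one_div_nhdsGT_zero.eventually_gt_atTop 0]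
      with α hα hL
    exact div_pos hα hL
  have hneg (hb1 : b < 1) :=
    hlim.eventually_neg_of_mul (sub_neg.2 ((lt_div_iff₀ hb).2 (by linarith))) hscale
  have hpos (hb1 : 1 < b) :=
    hlim.eventually_pos_of_mul (sub_pos.2 (div_lt_self two_pos hb1)) hscale
  exact (eventually_and.2 ⟨eventually_imp_distrib_left.2 hneg,
    eventually_imp_distrib_left.2 hpos⟩).exists_forall_of_nhdsGT

/-- If `c α / (ln(1/α)/α) → 2` as `α → 0⁺`, and `ζ = α(1 - b/ln(1/α))` for a
constant `b > 0`, `b ≠ 1`, then for sufficiently small `α`, `ψ″(ζ)` is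
negative if `b < 1` and positive if `b > 1`. -/
theorem psi_second_deriv_sign (b : ℝ) (hb : 0 < b) (hb1 : b ≠ 1) (c : ℝ → ℝ)
    (hc : Tendsto (fun α => c α * α / Real.log (1 / α))
      (nhdsWithin 0 (Set.Ioi 0)) (nhds 2)) :
    ∃ α₀ > 0, ∀ α : ℝ, 0 < α → α < α₀ →
      (b < 1 →
        c α / (1 - α) ^ 4 - 2 / (α - α * (1 - b / Real.log (1 / α))) -
          1 / (α * (1 - b / Real.log (1 / α))) -
          1 / (1 - 2 * α + α * (1 - b / Real.log (1 / α))) < 0) ∧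
      (1 < b →
        0 < c α / (1 - α) ^ 4 - 2 / (α - α * (1 - b / Real.log (1 / α))) -
          1 / (α * (1 - b / Real.log (1 / α))) -
          1 / (1 - 2 * α + α * (1 - b / Real.log (1 / α)))) :=
  psi_second_deriv_sign_general b hb c hc
end

section
/- Fix a constant b > 0 with b ≠ 1 and let ε(α) → 0 as α → 0⁺. Suppose ζ = α(1 − δ) with δ = b√α/e, and c = (2 ln(1/α) + 2 − ε(α))/α. Then ψ′(ζ) = c(ζ−α²)/(1−α)⁴ + 2 ln(α−ζ) − ln ζ − ln(1−2α+ζ) converges to 2 ln b as α → 0⁺; in particular it is negative for sufficiently small α if b < 1, and positive if b > 1. -/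
/-!
With `δ = β√α` we have `α - ζ = αδ` and `ln δ = ln β + ½ ln α`, so the logarithms contribute
`2 ln α + 2 ln β + o(1)`, while `c (ζ - α²)/(1 - α)⁴ = (-2 ln α + 2 - ε)(1 + O(√α))`. The
`ln α` terms cancel up to `O(√α ln α) → 0`, leaving `2 + 2 ln β`; for `β = b/e` this is `2 ln b`.
-/

open Filter Topology Real

lemma exists_forall_Ioo_of_eventually_nhdsGT {α : Type*} [LinearOrder α] [TopologicalSpace α]
    [OrderTopology α] [NoMaxOrder α] {p : α → Prop} {a : α} (h : ∀ᶠ x in 𝓝[>] a, p x) :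
    ∃ a₀ > a, ∀ x, a < x → x < a₀ → p x := by
  obtain ⟨a₀, ha₀, hsub⟩ := mem_nhdsGT_iff_exists_Ioo_subset.1 h
  exact ⟨a₀, ha₀, fun x h₁ h₂ => hsub ⟨h₁, h₂⟩⟩

lemma tendsto_log_mul_sqrt_nhdsGT_zero : Tendsto (fun x => log x * √x) (𝓝[>] 0) (𝓝 0) := by
  simpa only [sqrt_eq_rpow] using tendsto_log_mul_rpow_nhdsGT_zero one_half_pos

/-- `ψ′(ζ)` at `ζ = α(1 - β√α)` and `c = (2 ln(1/α) + 2 - ε α)/α`. -/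
noncomputable def psiDeriv (β : ℝ) (ε : ℝ → ℝ) (α : ℝ) : ℝ :=
  ((2 * log (1 / α) + 2 - ε α) / α) * (α * (1 - β * √α) - α ^ 2) / (1 - α) ^ 4 +
    2 * log (α - α * (1 - β * √α)) - log (α * (1 - β * √α)) -
    log (1 - 2 * α + α * (1 - β * √α))

/-- The first summand is `2 ln α · (1 - (1 - β√α - α)/(1 - α)⁴)` with a factor `√α` pulled out of
the bracket. -/
lemma psiDeriv_eq {β α : ℝ} (ε : ℝ → ℝ) (hβ : β ≠ 0) (hα : 0 < α) (hα1 : α ≠ 1)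
    (hδ : β * √α ≠ 1) :
    psiDeriv β ε α =
      2 * (log α * √α) * ((β - √α * (3 - 6 * α + 4 * α ^ 2 - α ^ 3)) / (1 - α) ^ 4) +
        (2 - ε α) * ((1 - β * √α - α) / (1 - α) ^ 4) + 2 * log β -
        log (1 - β * √α) - log (1 - α - α * (β * √α)) := by
  have hs : √α ≠ 0 := (sqrt_pos.2 hα).ne'
  have hss : √α * √α = α := mul_self_sqrt hα.le
  have hlog_gap : log (α - α * (1 - β * √α)) = log α + log β + log α / 2 := by
    rw [show α - α * (1 - β * √α) = α * β * √α by ring, log_mul (by positivity) hs,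
      log_mul hα.ne' hβ, log_sqrt hα.le]
  have hlog_zeta : log (α * (1 - β * √α)) = log α + log (1 - β * √α) :=
    log_mul hα.ne' (sub_ne_zero.2 hδ.symm)
  have hlast : 1 - 2 * α + α * (1 - β * √α) = 1 - α - α * (β * √α) := by ring
  have h1α : (1 : ℝ) - α ≠ 0 := sub_ne_zero.2 hα1.symm
  rw [psiDeriv, one_div, log_inv, hlog_gap, hlog_zeta, hlast]
  generalize √α = s at hs hss ⊢
  subst hss
  rw [← sq] at h1α
  field_simp
  ring

lemma tendsto_psiDeriv {β : ℝ} {ε : ℝ → ℝ} (hβ : β ≠ 0) (hε : Tendsto ε (𝓝[>] 0) (𝓝 0)) :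
    Tendsto (psiDeriv β ε) (𝓝[>] 0) (𝓝 (2 + 2 * log β)) := by
  have hc {f : ℝ → ℝ} (hf : ContinuousAt f 0) : Tendsto f (𝓝[>] 0) (𝓝 (f 0)) :=
    hf.continuousWithinAt.tendsto
  have hk := hc (f := fun α => (β - √α * (3 - 6 * α + 4 * α ^ 2 - α ^ 3)) / (1 - α) ^ 4)
    (by fun_prop (disch := simp))
  have hf := hc (f := fun α => (1 - β * √α - α) / (1 - α) ^ 4) (by fun_prop (disch := simp))
  have hl₁ := hc (f := fun α => log (1 - β * √α)) (by fun_prop (disch := simp))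
  have hl₂ := hc (f := fun α => log (1 - α - α * (β * √α))) (by fun_prop (disch := simp))
  have hsum := (((((tendsto_log_mul_sqrt_nhdsGT_zero.const_mul 2).mul hk).add
    ((tendsto_const_nhds (x := (2 : ℝ))).sub hε |>.mul hf)).add_const (2 * log β)).sub hl₁).sub hl₂
  simp only [sqrt_zero, mul_zero, zero_mul, sub_zero, zero_add, one_pow, div_one, mul_one,
    log_one] at hsum
  refine hsum.congr' ?_
  have hδ : ∀ᶠ α in 𝓝[>] (0 : ℝ), β * √α ≠ 1 :=
    (hc (f := fun α => β * √α) (by fun_prop)).eventually_ne (by simp)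
  filter_upwards [Ioo_mem_nhdsGT zero_lt_one, hδ] with α ⟨hα, hα1⟩ hδ
  exact (psiDeriv_eq ε hβ hα hα1.ne hδ).symm

theorem psi_first_deriv_limit_general (b : ℝ) (hb : 0 < b) (ε : ℝ → ℝ)
    (hε : Tendsto ε (nhdsWithin 0 (Set.Ioi 0)) (nhds 0)) :
    Tendsto (fun α : ℝ =>
        ((2 * Real.log (1 / α) + 2 - ε α) / α) *
            (α * (1 - b * Real.sqrt α / Real.exp 1) - α ^ 2) / (1 - α) ^ 4 +
          2 * Real.log (α - α * (1 - b * Real.sqrt α / Real.exp 1)) -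
          Real.log (α * (1 - b * Real.sqrt α / Real.exp 1)) -
          Real.log (1 - 2 * α + α * (1 - b * Real.sqrt α / Real.exp 1)))
      (nhdsWithin 0 (Set.Ioi 0)) (nhds (2 * Real.log b)) ∧
    (b < 1 → ∃ α₀ > 0, ∀ α : ℝ, 0 < α → α < α₀ →
      ((2 * Real.log (1 / α) + 2 - ε α) / α) *
          (α * (1 - b * Real.sqrt α / Real.exp 1) - α ^ 2) / (1 - α) ^ 4 +
        2 * Real.log (α - α * (1 - b * Real.sqrt α / Real.exp 1)) -
        Real.log (α * (1 - b * Real.sqrt α / Real.exp 1)) -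
        Real.log (1 - 2 * α + α * (1 - b * Real.sqrt α / Real.exp 1)) < 0) ∧
    (1 < b → ∃ α₀ > 0, ∀ α : ℝ, 0 < α → α < α₀ →
      0 < ((2 * Real.log (1 / α) + 2 - ε α) / α) *
          (α * (1 - b * Real.sqrt α / Real.exp 1) - α ^ 2) / (1 - α) ^ 4 +
        2 * Real.log (α - α * (1 - b * Real.sqrt α / Real.exp 1)) -
        Real.log (α * (1 - b * Real.sqrt α / Real.exp 1)) -
        Real.log (1 - 2 * α + α * (1 - b * Real.sqrt α / Real.exp 1))) := by
  have hlim : Tendsto (psiDeriv (b / exp 1) ε) (𝓝[>] 0) (𝓝 (2 * log b)) := by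
    convert tendsto_psiDeriv (div_pos hb (exp_pos 1)).ne' hε using 2
    rw [log_div hb.ne' (exp_ne_zero 1), log_exp]
    ring
  simp only [mul_div_right_comm b]
  refine ⟨hlim, fun hb1 => ?_, fun hb1 => ?_⟩
  · have hneg : 2 * log b < 0 := by linarith [log_neg hb hb1]
    exact exists_forall_Ioo_of_eventually_nhdsGT (hlim.eventually (eventually_lt_nhds hneg))
  · have hpos : 0 < 2 * log b := by linarith [log_pos hb1]
    exact exists_forall_Ioo_of_eventually_nhdsGT (hlim.eventually (eventually_gt_nhds hpos))

/-- With `ζ = α(1 - b√α/e)`, `c = (2 ln(1/α) + 2 - ε(α))/α` where `ε(α) → 0`,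
the expression `ψ′(ζ)` converges to `2 ln b` as `α → 0⁺`; in particular it is
eventually negative if `b < 1` and eventually positive if `b > 1`. -/
theorem psi_first_deriv_limit (b : ℝ) (hb : 0 < b) (hb1 : b ≠ 1) (ε : ℝ → ℝ)
    (hε : Tendsto ε (nhdsWithin 0 (Set.Ioi 0)) (nhds 0)) :
    Tendsto (fun α : ℝ =>
        ((2 * Real.log (1 / α) + 2 - ε α) / α) *
            (α * (1 - b * Real.sqrt α / Real.exp 1) - α ^ 2) / (1 - α) ^ 4 +
          2 * Real.log (α - α * (1 - b * Real.sqrt α / Real.exp 1)) -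
          Real.log (α * (1 - b * Real.sqrt α / Real.exp 1)) -
          Real.log (1 - 2 * α + α * (1 - b * Real.sqrt α / Real.exp 1)))
      (nhdsWithin 0 (Set.Ioi 0)) (nhds (2 * Real.log b)) ∧
    (b < 1 → ∃ α₀ > 0, ∀ α : ℝ, 0 < α → α < α₀ →
      ((2 * Real.log (1 / α) + 2 - ε α) / α) *
          (α * (1 - b * Real.sqrt α / Real.exp 1) - α ^ 2) / (1 - α) ^ 4 +
        2 * Real.log (α - α * (1 - b * Real.sqrt α / Real.exp 1)) -
        Real.log (α * (1 - b * Real.sqrt α / Real.exp 1)) -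
        Real.log (1 - 2 * α + α * (1 - b * Real.sqrt α / Real.exp 1)) < 0) ∧
    (1 < b → ∃ α₀ > 0, ∀ α : ℝ, 0 < α → α < α₀ →
      0 < ((2 * Real.log (1 / α) + 2 - ε α) / α) *
          (α * (1 - b * Real.sqrt α / Real.exp 1) - α ^ 2) / (1 - α) ^ 4 +
        2 * Real.log (α - α * (1 - b * Real.sqrt α / Real.exp 1)) -
        Real.log (α * (1 - b * Real.sqrt α / Real.exp 1)) -
        Real.log (1 - 2 * α + α * (1 - b * Real.sqrt α / Real.exp 1))) :=
  psi_first_deriv_limit_general b hb ε hε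
end
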